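/- arXiv:2509.15060 — 2 statements merged into one kernel-verified Lean document; each statement's English description precedes it below -/
import Mathlib

section
/- Let F ∈ ℝ^{n×p}, w ∈ ℝ^p, y ∈ ℝ^n, and let z = (z_1,...,z_p) be independent Bernoulli random variables with P(z_j=1)=γ_j. Then E[ Σ_i (y_i - Σ_j F_{ij} w_j z_j)^2 ] = Σ_i (y_i - Σ_j F_{ij} w_j γ_j)^2 + Σ_{i,j} F_{ij}^2 w_j^2 γ_j (1 - γ_j). -/
open Finset

/-- pmf of a product-Bernoulli distribution on `{0,1}^p`. -/
noncomputable def bPMF {p : ℕ} (γ : Fin p → ℝ) (z : Fin p → Bool) : ℝ :=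
  ∏ j, if z j then γ j else 1 - γ j

/-- Expectation with respect to the product-Bernoulli distribution. -/
noncomputable def bExp {p : ℕ} (γ : Fin p → ℝ) (g : (Fin p → Bool) → ℝ) : ℝ :=
  ∑ z : Fin p → Bool, bPMF γ z * g z

lemma sum_prod_bool {p : ℕ} (f : Fin p → Bool → ℝ) :
    ∑ z : Fin p → Bool, ∏ j, f j (z j) = ∏ j, (f j false + f j true) := by
  rw [← Fintype.prod_sum (fun j (b : Bool) => f j b)]
  simp [Fintype.sum_bool, add_comm]

lemma bExp_add {p : ℕ} (γ : Fin p → ℝ) (f g : (Fin p → Bool) → ℝ) :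
    bExp γ (fun z => f z + g z) = bExp γ f + bExp γ g := by
  simp [bExp, mul_add, Finset.sum_add_distrib]

lemma bExp_sub {p : ℕ} (γ : Fin p → ℝ) (f g : (Fin p → Bool) → ℝ) :
    bExp γ (fun z => f z - g z) = bExp γ f - bExp γ g := by
  simp [bExp, mul_sub, Finset.sum_sub_distrib]

lemma bExp_const_mul {p : ℕ} (γ : Fin p → ℝ) (c : ℝ) (f : (Fin p → Bool) → ℝ) :
    bExp γ (fun z => c * f z) = c * bExp γ f := by
  simp [bExp, Finset.mul_sum, mul_left_comm]

lemma bExp_sum {p : ℕ} {ι : Type*} (γ : Fin p → ℝ) (s : Finset ι)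
    (f : ι → (Fin p → Bool) → ℝ) :
    bExp γ (fun z => ∑ i ∈ s, f i z) = ∑ i ∈ s, bExp γ (f i) := by
  simp only [bExp, Finset.mul_sum]
  exact Finset.sum_comm

lemma bExp_const {p : ℕ} (γ : Fin p → ℝ) (c : ℝ) :
    bExp γ (fun _ => c) = c := by
  have h : ∑ z : Fin p → Bool, bPMF γ z = 1 := by
    unfold bPMF
    rw [sum_prod_bool (fun j b => if b then γ j else 1 - γ j)]
    simp
  simp [bExp, ← Finset.sum_mul, h]

lemma bExp_moment {p : ℕ} (γ : Fin p → ℝ) (j k : Fin p) :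
    bExp γ (fun z => (if z j then (1:ℝ) else 0) * (if z k then (1:ℝ) else 0))
      = if j = k then γ j else γ j * γ k := by
  unfold bExp bPMF
  have h : ∀ z : Fin p → Bool,
      (∏ l, if z l then γ l else 1 - γ l) *
        ((if z j then (1:ℝ) else 0) * (if z k then (1:ℝ) else 0))
      = ∏ l, ((if z l then γ l else 1 - γ l)
          * ((if l = j then (if z l then (1:ℝ) else 0) else 1)
          * (if l = k then (if z l then (1:ℝ) else 0) else 1))) := by
    intro z
    rw [Finset.prod_mul_distrib, Finset.prod_mul_distrib,
      Finset.prod_ite_eq' Finset.univ j (fun l => if z l then (1:ℝ) else 0),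
      Finset.prod_ite_eq' Finset.univ k (fun l => if z l then (1:ℝ) else 0)]
    simp
  simp only [h]
  rw [sum_prod_bool (fun l b => (if b then γ l else 1 - γ l)
          * ((if l = j then (if b then (1:ℝ) else 0) else 1)
          * (if l = k then (if b then (1:ℝ) else 0) else 1)))]
  have h2 : ∀ l, ((if (false:Bool) then γ l else 1 - γ l)
          * ((if l = j then (if (false:Bool) then (1:ℝ) else 0) else 1)
          * (if l = k then (if (false:Bool) then (1:ℝ) else 0) else 1)))
      + ((if (true:Bool) then γ l else 1 - γ l)
          * ((if l = j then (if (true:Bool) then (1:ℝ) else 0) else 1)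
          * (if l = k then (if (true:Bool) then (1:ℝ) else 0) else 1)))
      = if l = j ∨ l = k then γ l else 1 := by
    intro l
    by_cases h1 : l = j <;> by_cases hk : l = k <;> simp [h1, hk]
  rw [Finset.prod_congr rfl (fun l _ => h2 l)]
  by_cases hjk : j = k
  · subst hjk
    simp only [or_self]
    rw [Finset.prod_ite_eq' Finset.univ j γ]
    simp
  · rw [if_neg hjk]
    have : ∀ l : Fin p, (if l = j ∨ l = k then γ l else 1)
        = (if l = j then γ l else 1) * (if l = k then γ l else 1) := by
      intro l
      by_cases h1 : l = j <;> by_cases h2 : l = k <;>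
        simp_all [h1, h2]
    rw [Finset.prod_congr rfl (fun l _ => this l), Finset.prod_mul_distrib,
      Finset.prod_ite_eq' Finset.univ j γ, Finset.prod_ite_eq' Finset.univ k γ]
    simp

lemma bExp_key {p : ℕ} (γ : Fin p → ℝ) (a : ℝ) (c : Fin p → ℝ) :
    bExp γ (fun z => (a - ∑ j, c j * (if z j then (1:ℝ) else 0)) ^ 2)
      = (a - ∑ j, c j * γ j) ^ 2 + ∑ j, (c j) ^ 2 * γ j * (1 - γ j) := by
  have h1 : ∀ z : Fin p → Bool,
      (a - ∑ j, c j * (if z j then (1:ℝ) else 0)) ^ 2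
      = (a ^ 2 - 2 * a * (∑ j, c j * (if z j then (1:ℝ) else 0)))
        + ∑ j, ∑ k, (c j * c k) *
            ((if z j then (1:ℝ) else 0) * (if z k then (1:ℝ) else 0)) := by
    intro z
    have : (∑ j, c j * (if z j then (1:ℝ) else 0)) ^ 2
        = ∑ j, ∑ k, (c j * c k) *
            ((if z j then (1:ℝ) else 0) * (if z k then (1:ℝ) else 0)) := by
      rw [sq, Finset.sum_mul_sum]
      exact Finset.sum_congr rfl fun j _ => Finset.sum_congr rfl fun k _ => by ring
    rw [sub_sq, this]
  simp only [h1]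
  rw [bExp_add, bExp_sub]
  rw [bExp_const γ (a ^ 2)]
  rw [bExp_const_mul γ (2*a) (fun z => ∑ j, c j * (if z j then (1:ℝ) else 0))]
  rw [bExp_sum γ Finset.univ (fun j z => c j * (if z j then (1:ℝ) else 0))]
  rw [bExp_sum γ Finset.univ
    (fun j z => ∑ k, (c j * c k) *
      ((if z j then (1:ℝ) else 0) * (if z k then (1:ℝ) else 0)))]
  have hE1 : ∀ j, bExp γ (fun z => c j * (if z j then (1:ℝ) else 0)) = c j * γ j := by
    intro j
    rw [bExp_const_mul]
    have : (fun z : Fin p → Bool => (if z j then (1:ℝ) else 0))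
        = fun z => (if z j then (1:ℝ) else 0) * (if z j then (1:ℝ) else 0) := by
      funext z; cases z j <;> simp
    rw [this, bExp_moment]; simp
  have hE2 : ∀ j, bExp γ (fun z => ∑ k, (c j * c k) *
      ((if z j then (1:ℝ) else 0) * (if z k then (1:ℝ) else 0)))
      = (∑ k, (c j * c k) * (γ j * γ k)) + (c j)^2 * γ j * (1 - γ j) := by
    intro j
    rw [bExp_sum γ Finset.univ]
    have : ∀ k, bExp γ (fun z => (c j * c k) *
        ((if z j then (1:ℝ) else 0) * (if z k then (1:ℝ) else 0)))
        = (c j * c k) * (γ j * γ k)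
          + (if k = j then (c j)^2 * γ j * (1 - γ j) else 0) := by
      intro k
      rw [bExp_const_mul, bExp_moment]
      by_cases hk : k = j
      · subst hk; simp; ring
      · have : ¬ (j = k) := fun h => hk h.symm
        simp [hk, this]
    rw [Finset.sum_congr rfl (fun k _ => this k), Finset.sum_add_distrib,
      Finset.sum_ite_eq' Finset.univ j (fun _ => (c j)^2 * γ j * (1 - γ j))]
    simp
  rw [Finset.sum_congr rfl (fun j _ => hE1 j), Finset.sum_congr rfl (fun j _ => hE2 j)]
  rw [Finset.sum_add_distrib]
  have : (∑ j, ∑ k, (c j * c k) * (γ j * γ k)) = (∑ j, c j * γ j) ^ 2 := by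
    rw [sq, Finset.sum_mul_sum]
    exact Finset.sum_congr rfl fun j _ => Finset.sum_congr rfl fun k _ => by ring
  rw [this, sub_sq]
  ring

/-- Theorem 1 of the paper: closed form of the expected squared
residual under independent Bernoulli masking. -/
theorem stmt_2 {n p : ℕ} (F : Matrix (Fin n) (Fin p) ℝ) (w : Fin p → ℝ)
    (y : Fin n → ℝ) (γ : Fin p → ℝ) (hγ : ∀ j, γ j ∈ Set.Icc (0:ℝ) 1) :
    bExp γ (fun z => ∑ i, (y i - ∑ j, F i j * w j * (if z j then (1:ℝ) else 0)) ^ 2)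
      = (∑ i, (y i - ∑ j, F i j * w j * γ j) ^ 2)
        + ∑ i, ∑ j, (F i j) ^ 2 * (w j) ^ 2 * γ j * (1 - γ j) := by
  rw [bExp_sum γ Finset.univ
    (fun i z => (y i - ∑ j, F i j * w j * (if z j then (1:ℝ) else 0)) ^ 2)]
  have hkey : ∀ i, bExp γ
      (fun z => (y i - ∑ j, F i j * w j * (if z j then (1:ℝ) else 0)) ^ 2)
      = (y i - ∑ j, F i j * w j * γ j) ^ 2
        + ∑ j, (F i j) ^ 2 * (w j) ^ 2 * γ j * (1 - γ j) := by
    intro i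
    have h := bExp_key γ (y i) (fun j => F i j * w j)
    simp only [mul_assoc] at h ⊢
    rw [h]
    congr 1
    exact Finset.sum_congr rfl fun j _ => by ring
  rw [Finset.sum_congr rfl (fun i _ => hkey i), Finset.sum_add_distrib]
end

section
/- For any y ∈ ℝ^n, F ∈ ℝ^{n×p}, and λ ≥ 0, the minimum of ||y - Fθ||_2^2 + λ·ℓ0(θ) over θ ∈ ℝ^p equals the minimum over w ∈ ℝ^p and γ ∈ [0,1]^p of ||y - F(w⊙γ)||_2^2 + Σ_{i,j} F_{ij}^2 w_j^2 γ_j(1-γ_j) + λ Σ_j γ_j, where w⊙γ denotes componentwise multiplication. -/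
/-!
Along each coordinate `γ j` the relaxed objective is affine, since the `t ^ 2` coefficient of the
squared residual is cancelled by the variance term. Hence its minimum over the cube `[0, 1] ^ p` is
attained at a vertex, where the variance term vanishes and `θ = w ⊙ γ` satisfies
`ℓ0 θ ≤ ∑ j, γ j`. Conversely, the support indicator of `θ` with `w = θ` recovers the ℓ0 objective
exactly.
-/

open Finset

/-- number of nonzero components of a vector, as a real number. -/
noncomputable def l0 {p : ℕ} (θ : Fin p → ℝ) : ℝ :=
  ∑ j, if θ j = 0 then 0 else 1

open Function

section AffineInEachCoord

variable {ι : Type*} [DecidableEq ι]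

theorem sum_apply_update [Fintype ι] {α M : Type*} [AddCommGroup M] (g : ι → α → M)
    (γ : ι → α) (j : ι) (t : α) :
    ∑ k, g k (update γ j t k) = ∑ k, g k (γ k) + (g j t - g j (γ j)) := by
  have h : ∀ k, g k (update γ j t k) = g k (γ k) + if k = j then g j t - g j (γ j) else 0 := by
    intro k
    by_cases hk : k = j
    · subst hk; simp
    · simp [hk]
  simp only [h, sum_add_distrib, sum_ite_eq', mem_univ, if_true]

def IsAffineInEachCoord (f : (ι → ℝ) → ℝ) : Prop :=
  ∀ γ j t, f (update γ j t) = (1 - t) * f (update γ j 0) + t * f (update γ j 1)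

namespace IsAffineInEachCoord

variable {f g : (ι → ℝ) → ℝ}

theorem add (hf : IsAffineInEachCoord f) (hg : IsAffineInEachCoord g) :
    IsAffineInEachCoord (f + g) := by
  intro γ j t
  simp only [Pi.add_apply, hf γ j t, hg γ j t]
  ring

theorem const_mul (c : ℝ) (hf : IsAffineInEachCoord f) :
    IsAffineInEachCoord fun γ => c * f γ := by
  intro γ j t
  simp only [hf γ j t]
  ring

theorem sum {κ : Type*} (s : Finset κ) {f : κ → (ι → ℝ) → ℝ}
    (hf : ∀ i ∈ s, IsAffineInEachCoord (f i)) :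
    IsAffineInEachCoord fun γ => ∑ i ∈ s, f i γ := by
  intro γ j t
  rw [mul_sum, mul_sum, ← sum_add_distrib]
  exact sum_congr rfl fun i hi => hf i hi γ j t

theorem exists_update_le (hf : IsAffineInEachCoord f) {γ : ι → ℝ} {j : ι}
    (hγj : γ j ∈ Set.Icc (0 : ℝ) 1) :
    ∃ b : ℝ, (b = 0 ∨ b = 1) ∧ f (update γ j b) ≤ f γ := by
  have h := hf γ j (γ j)
  rw [update_eq_self] at h
  obtain ⟨h0, h1⟩ := hγj
  rcases le_total (f (update γ j 0)) (f (update γ j 1)) with hle | hle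
  · exact ⟨0, .inl rfl, by nlinarith⟩
  · exact ⟨1, .inr rfl, by nlinarith⟩

theorem exists_vertex_le [Fintype ι] (hf : IsAffineInEachCoord f) {γ : ι → ℝ}
    (hγ : ∀ j, γ j ∈ Set.Icc (0 : ℝ) 1) :
    ∃ γ' : ι → ℝ, (∀ j, γ' j = 0 ∨ γ' j = 1) ∧ f γ' ≤ f γ := by
  suffices ∀ s : Finset ι, ∀ γ : ι → ℝ, (∀ j, γ j ∈ Set.Icc (0 : ℝ) 1) →
      (∀ j ∉ s, γ j = 0 ∨ γ j = 1) → ∃ γ' : ι → ℝ, (∀ j, γ' j = 0 ∨ γ' j = 1) ∧ f γ' ≤ f γ from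
    this univ γ hγ fun j hj => absurd (mem_univ j) hj
  intro s
  induction s using Finset.induction with
  | empty => exact fun γ _ hvert => ⟨γ, fun j => hvert j (notMem_empty j), le_rfl⟩
  | insert a s _ ih =>
    intro γ hγ hvert
    obtain ⟨b, hb, hle⟩ := hf.exists_update_le (hγ a)
    obtain ⟨γ', hγ', hle'⟩ := ih (update γ a b)
      (fun j => by
        rcases eq_or_ne j a with rfl | hja
        · rcases hb with rfl | rfl <;> simp
        · simpa [hja] using hγ j)
      (fun j hj => by
        rcases eq_or_ne j a with rfl | hja
        · simpa using hb
        · simpa [hja] using hvert j (by simp [hja, hj]))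
    exact ⟨γ', hγ', hle'.trans hle⟩

end IsAffineInEachCoord

theorem isAffineInEachCoord_sum [Fintype ι] : IsAffineInEachCoord fun γ : ι → ℝ => ∑ k, γ k := by
  intro γ j t
  simp only [sum_apply_update (fun _ x => x)]
  ring

/-- This is `𝔼 (r - ∑ k, c k * ξ k) ^ 2` for independent `ξ k ~ Bernoulli (γ k)`, which is
multiaffine in `γ` because each `ξ k ^ 2 = ξ k`. -/
theorem isAffineInEachCoord_sq_sub_add_variance [Fintype ι] (r : ℝ) (c : ι → ℝ) :
    IsAffineInEachCoord fun γ : ι → ℝ =>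
      (r - ∑ k, c k * γ k) ^ 2 + ∑ k, c k ^ 2 * γ k * (1 - γ k) := by
  intro γ j t
  simp only [sum_apply_update (fun k x => c k * x),
    sum_apply_update (fun k x => c k ^ 2 * x * (1 - x))]
  ring

end AffineInEachCoord

section Objective

variable {n p : ℕ}

noncomputable def l0Objective (y : Fin n → ℝ) (F : Matrix (Fin n) (Fin p) ℝ) (lam : ℝ)
    (θ : Fin p → ℝ) : ℝ :=
  (∑ i, (y i - ∑ j, F i j * θ j) ^ 2) + lam * l0 θ

noncomputable def relaxedObjective (y : Fin n → ℝ) (F : Matrix (Fin n) (Fin p) ℝ) (lam : ℝ)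
    (w γ : Fin p → ℝ) : ℝ :=
  (∑ i, (y i - ∑ j, F i j * (w j * γ j)) ^ 2)
    + (∑ i, ∑ j, (F i j) ^ 2 * (w j) ^ 2 * γ j * (1 - γ j))
    + lam * ∑ j, γ j

theorem isAffineInEachCoord_relaxedObjective (y : Fin n → ℝ) (F : Matrix (Fin n) (Fin p) ℝ)
    (lam : ℝ) (w : Fin p → ℝ) : IsAffineInEachCoord (relaxedObjective y F lam w) := by
  have h : relaxedObjective y F lam w = (fun γ => ∑ i, ((y i - ∑ k, F i k * w k * γ k) ^ 2
      + ∑ k, (F i k * w k) ^ 2 * γ k * (1 - γ k))) + fun γ => lam * ∑ k, γ k := by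
    funext γ
    simp only [relaxedObjective, Pi.add_apply, sum_add_distrib, mul_pow, mul_assoc]
  rw [h]
  exact (IsAffineInEachCoord.sum _ fun i _ => isAffineInEachCoord_sq_sub_add_variance _ _).add
    (isAffineInEachCoord_sum.const_mul lam)

theorem relaxedObjective_support_indicator (y : Fin n → ℝ) (F : Matrix (Fin n) (Fin p) ℝ)
    (lam : ℝ) (θ : Fin p → ℝ) :
    relaxedObjective y F lam θ (fun j => if θ j = 0 then 0 else 1) = l0Objective y F lam θ := by
  have hθ : ∀ j, θ j * (if θ j = 0 then 0 else 1) = θ j := fun j => by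
    split_ifs with h <;> simp [h]
  have hvar : ∀ x : ℝ, (if x = 0 then (0 : ℝ) else 1) * (1 - if x = 0 then 0 else 1) = 0 :=
    fun x => by split_ifs <;> simp
  simp only [relaxedObjective, l0Objective, l0, hθ, mul_assoc, hvar, mul_zero, sum_const_zero,
    add_zero]

theorem l0_mul_le_sum {γ : Fin p → ℝ} (hγ : ∀ j, γ j = 0 ∨ γ j = 1) (w : Fin p → ℝ) :
    l0 (fun j => w j * γ j) ≤ ∑ j, γ j :=
  sum_le_sum fun j _ => by rcases hγ j with h | h <;> split_ifs <;> simp_all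

theorem l0Objective_le_relaxedObjective (y : Fin n → ℝ) (F : Matrix (Fin n) (Fin p) ℝ)
    {lam : ℝ} (hlam : 0 ≤ lam) (w : Fin p → ℝ) {γ : Fin p → ℝ} (hγ : ∀ j, γ j = 0 ∨ γ j = 1) :
    l0Objective y F lam (fun j => w j * γ j) ≤ relaxedObjective y F lam w γ := by
  have hvar : ∀ i j, (F i j) ^ 2 * (w j) ^ 2 * γ j * (1 - γ j) = 0 := fun i j => by
    rcases hγ j with h | h <;> simp [h]
  simp only [l0Objective, relaxedObjective, hvar, sum_const_zero, add_zero]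
  gcongr
  exact l0_mul_le_sum hγ w

end Objective

/-- Corollary 2 of the paper: the minimum of the ℓ0-regularized
least squares objective equals the minimum of its exact probabilistic
reformulation. -/
theorem stmt_5 {n p : ℕ} (y : Fin n → ℝ) (F : Matrix (Fin n) (Fin p) ℝ)
    (lam : ℝ) (hlam : 0 ≤ lam) :
    sInf {v : ℝ | ∃ θ : Fin p → ℝ,
        v = (∑ i, (y i - ∑ j, F i j * θ j) ^ 2) + lam * l0 θ}
    = sInf {v : ℝ | ∃ w γ : Fin p → ℝ, (∀ j, γ j ∈ Set.Icc (0:ℝ) 1) ∧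
        v = (∑ i, (y i - ∑ j, F i j * (w j * γ j)) ^ 2)
          + (∑ i, ∑ j, (F i j) ^ 2 * (w j) ^ 2 * γ j * (1 - γ j))
          + lam * ∑ j, γ j} := by
  apply csInf_eq_csInf_of_forall_exists_le
  · rintro _ ⟨θ, rfl⟩
    refine ⟨relaxedObjective y F lam θ _, ⟨θ, _, fun j => ?_, rfl⟩,
      (relaxedObjective_support_indicator y F lam θ).le⟩
    split_ifs <;> simp
  · rintro _ ⟨w, γ, hγ, rfl⟩
    obtain ⟨γ', hγ', hle⟩ := (isAffineInEachCoord_relaxedObjective y F lam w).exists_vertex_le hγ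
    exact ⟨_, ⟨fun j => w j * γ' j, rfl⟩,
      (l0Objective_le_relaxedObjective y F hlam w hγ').trans hle⟩
end
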